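/- arXiv:2003.04627 — 5 statements merged into one kernel-verified Lean document; each statement's English description precedes it below -/
import Mathlib

section
/- Every clause learned by the Backtrack rule in an SCL(T) run is entailed by N ∪ U: the invariant N ⊨ U is preserved by all SCL(T) rules. -/
/-! Cut and monotonicity make entailment transitive: a set entailing every clause of `T` entails
whatever `T` entails. Since resolution and factorization are sound, induction on the derivation
shows that a set entailing all premises of a derivation entails its conclusion; `N` entails all
of `N ∪ U`. -/

/-- The conflict clause in any SCL(T) state is obtained from a clause of `S = N ∪ U`
by finitely many resolution/factorization inferences with clauses of `S`. -/
inductive Derives {Clause : Type} (Res : Clause → Clause → Clause → Prop)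
    (Fact : Clause → Clause → Prop) (S : Set Clause) : Clause → Prop
  | mem {C} : C ∈ S → Derives Res Fact S C
  | res {C D E} : Derives Res Fact S C → D ∈ S → Res C D E → Derives Res Fact S E
  | fact {C E} : Derives Res Fact S C → Fact C E → Derives Res Fact S E

section

variable {Clause : Type} {entails : Set Clause → Clause → Prop}

theorem entails_of_forall_entails
    (hmono : ∀ (S S' : Set Clause) (C : Clause), S ⊆ S' → entails S C → entails S' C)
    (hcut : ∀ (S T : Set Clause) (C : Clause),
      (∀ D ∈ T, entails S D) → entails (S ∪ T) C → entails S C)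
    {S T : Set Clause} {C : Clause} (hST : ∀ D ∈ T, entails S D) (hT : entails T C) :
    entails S C :=
  hcut S T C hST (hmono T (S ∪ T) C Set.subset_union_right hT)

theorem Derives.sound {Res : Clause → Clause → Clause → Prop} {Fact : Clause → Clause → Prop}
    (hmono : ∀ (S S' : Set Clause) (C : Clause), S ⊆ S' → entails S C → entails S' C)
    (hcut : ∀ (S T : Set Clause) (C : Clause),
      (∀ D ∈ T, entails S D) → entails (S ∪ T) C → entails S C)
    (hres : ∀ C D E : Clause, Res C D E → entails {C, D} E)
    (hfact : ∀ C E : Clause, Fact C E → entails {C} E)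
    {N S : Set Clause} (hS : ∀ C ∈ S, entails N C) {C : Clause} (hC : Derives Res Fact S C) :
    entails N C := by
  induction hC with
  | mem hC => exact hS _ hC
  | res _ hD hR ih =>
    refine entails_of_forall_entails hmono hcut ?_ (hres _ _ _ hR)
    rintro X (rfl | rfl)
    exacts [ih, hS _ hD]
  | fact _ hF ih =>
    refine entails_of_forall_entails hmono hcut ?_ (hfact _ _ hF)
    rintro X rfl
    exact ih

end

/-- Soundness of clause learning: if resolution and factorization are sound for the
entailment relation, entailment satisfies membership, monotonicity, and cut, and
`N ⊨ U`, then any clause derived from `N ∪ U` (in particular the learned clause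
`D ∨ L` at Backtrack) is entailed by `N`, hence `N ⊨ U ∪ {D ∨ L}`. -/
theorem learned_clause_sound {Clause : Type}
    (Res : Clause → Clause → Clause → Prop) (Fact : Clause → Clause → Prop)
    (entails : Set Clause → Clause → Prop)
    (hmem : ∀ (S : Set Clause) (C : Clause), C ∈ S → entails S C)
    (hmono : ∀ (S S' : Set Clause) (C : Clause), S ⊆ S' → entails S C → entails S' C)
    (hcut : ∀ (S T : Set Clause) (C : Clause),
      (∀ D ∈ T, entails S D) → entails (S ∪ T) C → entails S C)
    (hres : ∀ C D E : Clause, Res C D E → entails {C, D} E)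
    (hfact : ∀ C E : Clause, Fact C E → entails {C} E)
    (N U : Set Clause) (hU : ∀ C ∈ U, entails N C)
    (L : Clause) (hL : Derives Res Fact (N ∪ U) L) :
    entails N L ∧ ∀ C ∈ U ∪ {L}, entails N C := by
  have hNU : ∀ C ∈ N ∪ U, entails N C := by
    rintro C (hC | hC)
    exacts [hmem N C hC, hU C hC]
  have hNL : entails N L := hL.sound hmono hcut hres hfact hNU
  refine ⟨hNL, ?_⟩
  rintro C (hC | rfl)
  exacts [hU C hC, hNL]
end

section
/- Any hierarchic BS(LRA) model of the five clauses Nat(0); (y = x+1 → (Nat(x) → Nat(y))); (x < 0 → ¬Nat(x)); (0 < x < 1 → ¬Nat(x)); (x > 0 ∧ y = x+1 → (Nat(y) → Nat(x))) interprets Nat as exactly the set of natural numbers: Nat^A = {q ∈ ℚ | ∃n ∈ ℕ, q = n}. -/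
/-!
Upward closure from `0` puts every natural number in `S`. Conversely, `S` has no negative
elements, and from `q ∈ S` the downward clause can be applied `⌊q⌋₊` times as long as the result
stays positive; if `q` is not a natural number this lands on `q - ⌊q⌋₊ ∈ (0, 1)`, which `S`
must avoid.
-/

section

variable {α : Type*} {S : Set α}

theorem natCast_mem_of_add_one_mem [AddMonoidWithOne α] (h0 : (0 : α) ∈ S)
    (hs : ∀ q : α, q ∈ S → q + 1 ∈ S) (n : ℕ) : (n : α) ∈ S := by
  induction n with
  | zero => simpa using h0
  | succ n ih => simpa using hs _ ih

variable [CommRing α] [LinearOrder α] [IsStrictOrderedRing α]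

theorem sub_natCast_mem_of_lt (hdown : ∀ q : α, 0 < q → q + 1 ∈ S → q ∈ S) {q : α}
    (hq : q ∈ S) (k : ℕ) (hk : (k : α) < q) : q - k ∈ S := by
  induction k with
  | zero => simpa using hq
  | succ k ih =>
    push_cast at hk ⊢
    have hprev : q - k ∈ S := ih (by linarith)
    exact hdown _ (by linarith) (by rwa [sub_add_eq_sub_sub, sub_add_cancel])

theorem exists_natCast_eq_of_mem [FloorSemiring α] (hneg : ∀ q : α, q < 0 → q ∉ S)
    (hfrac : ∀ q : α, 0 < q → q < 1 → q ∉ S) (hdown : ∀ q : α, 0 < q → q + 1 ∈ S → q ∈ S)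
    {q : α} (hq : q ∈ S) : ∃ n : ℕ, q = n := by
  have hq0 : 0 ≤ q := not_lt.mp fun h => hneg q h hq
  refine ⟨⌊q⌋₊, ((Nat.floor_le hq0).eq_or_lt.resolve_right fun hlt => ?_).symm⟩
  refine hfrac (q - ⌊q⌋₊) (sub_pos.mpr hlt) ?_ (sub_natCast_mem_of_lt hdown hq _ hlt)
  linarith [Nat.lt_floor_add_one q]

end

/-- Any hierarchic BS(LRA) model of the five clauses `Nat(0)`;
`y = x+1 → (Nat(x) → Nat(y))`; `x < 0 → ¬Nat(x)`; `0 < x < 1 → ¬Nat(x)`;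
`x > 0 ∧ y = x+1 → (Nat(y) → Nat(x))` interprets `Nat` as exactly the set of
natural numbers. -/
theorem nat_exact (NatA : Set ℚ)
    (h0 : (0 : ℚ) ∈ NatA)
    (hs : ∀ q : ℚ, q ∈ NatA → q + 1 ∈ NatA)
    (hneg : ∀ q : ℚ, q < 0 → q ∉ NatA)
    (hfrac : ∀ q : ℚ, 0 < q → q < 1 → q ∉ NatA)
    (hdown : ∀ q : ℚ, 0 < q → q + 1 ∈ NatA → q ∈ NatA) :
    NatA = {q : ℚ | ∃ n : ℕ, q = (n : ℚ)} := by
  ext q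
  constructor
  · exact exists_natCast_eq_of_mem hneg hfrac hdown
  · rintro ⟨n, rfl⟩
    exact natCast_mem_of_add_one_mem h0 hs n
end

section
/- The BS(LRA) clause set consisting of the five Nat-defining clauses together with {x = a → Nat(x)}, {P(0)}, {y = x+1 → (P(x) → P(y))}, {x = a → ¬P(x)} is unsatisfiable over hierarchic (standard ℚ) models, yet every finite subset of its set of ground instances is satisfiable (non-compactness of almost pure BS(LRA)). -/
/-!
The five clauses on `Nat` force its interpretation to be exactly `ℕ` inside any archimedean
ordered ring: an element `q > 1` steps down to `q - 1`, and the chain ends at `0` or `1` since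
nothing else lies below `1`. Hence `a` is a natural number `n`, and the successor clause drives
`P` from `0` up to `n`, contradicting `¬P(a)`. If the successor clause is only required for the
first `N` steps, `a = N + 1` and `P = {0, …, N}` is a model.
-/

open Set

section NatDefining

variable {K : Type*} [CommRing K] [LinearOrder K] [IsStrictOrderedRing K]

/-- The five clauses by which the predicate `Nat` is axiomatized. -/
structure IsNatDefining (S : Set K) : Prop where
  zero_mem : (0 : K) ∈ S
  add_one_mem : ∀ q ∈ S, q + 1 ∈ S
  notMem_of_neg : ∀ q : K, q < 0 → q ∉ S
  notMem_of_pos_of_lt_one : ∀ q : K, 0 < q → q < 1 → q ∉ S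
  mem_of_pos_of_add_one_mem : ∀ q : K, 0 < q → q + 1 ∈ S → q ∈ S

theorem natCast_mem_of_zero_mem_of_add_one_mem {S : Set K} (h0 : (0 : K) ∈ S)
    (hS : ∀ q ∈ S, q + 1 ∈ S) (n : ℕ) : (n : K) ∈ S := by
  induction n with
  | zero => simpa using h0
  | succ n ih => simpa using hS _ ih

theorem isNatDefining_range_natCast : IsNatDefining (range (Nat.cast : ℕ → K)) where
  zero_mem := ⟨0, Nat.cast_zero⟩
  add_one_mem := by
    rintro _ ⟨m, rfl⟩
    exact ⟨m + 1, Nat.cast_succ m⟩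
  notMem_of_neg := by
    rintro q hq ⟨m, rfl⟩
    exact (Nat.cast_nonneg m).not_gt hq
  notMem_of_pos_of_lt_one := by
    rintro q hpos hlt ⟨m, rfl⟩
    rw [Nat.cast_pos] at hpos
    rw [Nat.cast_lt_one] at hlt
    omega
  mem_of_pos_of_add_one_mem := by
    rintro q hpos ⟨_ | m, hm⟩
    · rw [Nat.cast_zero] at hm
      linarith
    · exact ⟨m, by push_cast at hm; linarith⟩

theorem IsNatDefining.subset_range [Archimedean K] {S : Set K} (hS : IsNatDefining S) :
    S ⊆ range (Nat.cast : ℕ → K) := by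
  suffices h : ∀ n : ℕ, ∀ q ∈ S, q < n → q ∈ range (Nat.cast : ℕ → K) by
    intro q hq
    obtain ⟨n, hn⟩ := exists_nat_gt q
    exact h n q hq hn
  intro n
  induction n with
  | zero =>
    intro q hq hlt
    exact absurd hq (hS.notMem_of_neg q (by simpa using hlt))
  | succ n ih =>
    intro q hq hlt
    rcases lt_trichotomy q 1 with hlt_one | rfl | hgt_one
    · have hq0 : q = 0 := by
        by_contra hne
        rcases lt_or_gt_of_ne hne with hneg | hpos
        exacts [hS.notMem_of_neg q hneg hq, hS.notMem_of_pos_of_lt_one q hpos hlt_one hq]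
      exact ⟨0, by rw [hq0, Nat.cast_zero]⟩
    · exact ⟨1, Nat.cast_one⟩
    · have hpred : q - 1 ∈ S :=
        hS.mem_of_pos_of_add_one_mem _ (sub_pos.2 hgt_one) (by simpa using hq)
      obtain ⟨m, hm⟩ := ih (q - 1) hpred (by push_cast at hlt; linarith)
      exact ⟨m + 1, by push_cast; linarith⟩

theorem isNatDefining_iff_eq_range [Archimedean K] {S : Set K} :
    IsNatDefining S ↔ S = range (Nat.cast : ℕ → K) := by
  refine ⟨fun hS => hS.subset_range.antisymm ?_, fun hS => hS ▸ isNatDefining_range_natCast⟩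
  rintro _ ⟨n, rfl⟩
  exact natCast_mem_of_zero_mem_of_add_one_mem hS.zero_mem hS.add_one_mem n

end NatDefining

/-- Non-compactness of almost pure BS(LRA): the clause set consisting of the five
Nat-defining clauses together with `x = a → Nat(x)`, `P(0)`,
`y = x+1 → (P(x) → P(y))`, `x = a → ¬P(x)` is unsatisfiable over hierarchic
(standard ℚ) models, yet for every bound `N` there is a model satisfying all
clauses where the successor-chain instances for `P` are only required up to `N`
steps from `0`. -/
theorem bslra_noncompact :
    (¬ ∃ (a : ℚ) (NatA P : Set ℚ),
      (0 : ℚ) ∈ NatA ∧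
      (∀ q : ℚ, q ∈ NatA → q + 1 ∈ NatA) ∧
      (∀ q : ℚ, q < 0 → q ∉ NatA) ∧
      (∀ q : ℚ, 0 < q → q < 1 → q ∉ NatA) ∧
      (∀ q : ℚ, 0 < q → q + 1 ∈ NatA → q ∈ NatA) ∧
      a ∈ NatA ∧
      (0 : ℚ) ∈ P ∧
      (∀ q : ℚ, q ∈ P → q + 1 ∈ P) ∧
      a ∉ P) ∧
    (∀ N : ℕ, ∃ (a : ℚ) (NatA P : Set ℚ),
      (0 : ℚ) ∈ NatA ∧
      (∀ q : ℚ, q ∈ NatA → q + 1 ∈ NatA) ∧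
      (∀ q : ℚ, q < 0 → q ∉ NatA) ∧
      (∀ q : ℚ, 0 < q → q < 1 → q ∉ NatA) ∧
      (∀ q : ℚ, 0 < q → q + 1 ∈ NatA → q ∈ NatA) ∧
      a ∈ NatA ∧
      (0 : ℚ) ∈ P ∧
      (∀ k : ℕ, k < N → ((k : ℚ) ∈ P → ((k : ℚ) + 1) ∈ P)) ∧
      a ∉ P) := by
  constructor
  · rintro ⟨a, NatA, P, h0, h1, h2, h3, h4, ha, hP0, hPs, haP⟩
    obtain ⟨n, rfl⟩ := IsNatDefining.subset_range ⟨h0, h1, h2, h3, h4⟩ ha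
    exact haP (natCast_mem_of_zero_mem_of_add_one_mem hP0 hPs n)
  · intro N
    obtain ⟨h0, h1, h2, h3, h4⟩ := isNatDefining_range_natCast (K := ℚ)
    have hP : ∀ k : ℕ, (k : ℚ) ∈ Nat.cast '' Iic N ↔ k ≤ N := fun k =>
      Nat.cast_injective.mem_set_image
    refine ⟨((N + 1 : ℕ) : ℚ), range Nat.cast, Nat.cast '' Iic N, h0, h1, h2, h3, h4,
      mem_range_self _, ⟨0, Nat.zero_le N, Nat.cast_zero⟩, fun k hk _ => ?_, ?_⟩
    · exact_mod_cast (hP (k + 1)).2 hk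
    · rw [hP]
      omega
end

section
/- If two foreground literals of a pure abstracted clause set are unifiable, then their most general unifier is simple and its codomain consists only of variables. -/
/-!
Identifying the variables `xᵢ` and `yᵢ` generates an equivalence relation on variables. Sending
every variable to (the variable of) a chosen representative of its class unifies the two atoms, and
every unifier `θ'` is constant on the classes, so `θ'` factors through this renaming with `θ'`
itself as the instantiating substitution.
-/

namespace FlatUnification

variable {V : Type*}

section Representative

variable (r : V → V → Prop)

/-- A chosen representative of the class of `v` in the equivalence relation generated by `r`. -/
noncomputable def rep (v : V) : V := (Quot.mk r v).out

theorem mk_rep (v : V) : Quot.mk r (rep r v) = Quot.mk r v := Quot.out_eq _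

theorem rep_eq_of_rel {a b : V} (h : r a b) : rep r a = rep r b :=
  congrArg Quot.out (Quot.sound h)

theorem apply_rep_of_respects {β : Sort*} (f : V → β) (hf : ∀ a b, r a b → f a = f b) (v : V) :
    f (rep r v) = f v :=
  congrArg (Quot.lift f hf) (mk_rep r v)

end Representative

/-- The relation identifying the `i`-th arguments of `P(x₁,…,xₖ)` and `P(y₁,…,yₖ)`. -/
def argRel {ι : Type*} (xs ys : ι → V) (a b : V) : Prop := ∃ i, xs i = a ∧ ys i = b

theorem respects_argRel {ι β : Type*} {xs ys : ι → V} {f : V → β} (hf : ∀ i, f (xs i) = f (ys i)) :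
    ∀ a b, argRel xs ys a b → f a = f b := by
  rintro _ _ ⟨i, rfl, rfl⟩
  exact hf i

end FlatUnification

open FlatUnification in
/-- `apply δ` stands for the homomorphic extension of the substitution `δ` to terms; only its
action on variables is assumed. -/
theorem flat_mgu_variables_general
    (V Term : Type) (var : V → Term)
    (apply : (V → Term) → Term → Term)
    (happly : ∀ (δ : V → Term) (v : V), apply δ (var v) = δ v)
    (k : ℕ) (xs ys : Fin k → V) :
    ∃ η : V → Term,
      (∀ i, η (xs i) = η (ys i)) ∧
      (∀ θ' : V → Term, (∀ i, θ' (xs i) = θ' (ys i)) →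
        ∃ δ : V → Term, ∀ v, θ' v = apply δ (η v)) ∧
      (∀ v : V, ∃ w : V, η v = var w) := by
  refine ⟨fun v => var (rep (argRel xs ys) v), ?_, ?_, fun v => ⟨_, rfl⟩⟩
  · exact fun i => congrArg var (rep_eq_of_rel (argRel xs ys) ⟨i, rfl, rfl⟩)
  · intro θ' hθ'
    refine ⟨θ', fun v => ?_⟩
    rw [happly, apply_rep_of_respects _ θ' (respects_argRel hθ')]

/-- Unification of two flat foreground atoms `P(x₁,…,xₖ)` and `P(y₁,…,yₖ)` of a
pure abstracted clause set: there is a most general unifier `η` whose codomain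
consists only of variables. `Term` is an abstract term type containing the
variables via `var`, and `apply δ` is the homomorphic extension of a substitution
`δ` to terms (which on variables acts as `δ`). -/
theorem flat_mgu_variables
    (V Term : Type) (var : V → Term)
    (apply : (V → Term) → Term → Term)
    (happly : ∀ (δ : V → Term) (v : V), apply δ (var v) = δ v)
    (k : ℕ) (xs ys : Fin k → V)
    (θ : V → Term) (hθ : ∀ i, θ (xs i) = θ (ys i)) :
    ∃ η : V → Term,
      (∀ i, η (xs i) = η (ys i)) ∧
      (∀ θ' : V → Term, (∀ i, θ' (xs i) = θ' (ys i)) →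
        ∃ δ : V → Term, ∀ v, θ' v = apply δ (η v)) ∧
      (∀ v : V, ∃ w : V, η v = var w) :=
  flat_mgu_variables_general V Term var apply happly k xs ys
end

section
/- Undecidability transfer via redundancy: a clause set N = {C₁,…,Cₙ} is satisfiable iff N' = {P ∨ C₁, Q ∨ C₂, C₃,…,Cₙ, ¬P, ¬Q} is satisfiable, and N' is satisfiable iff the clause P ∨ Q is non-redundant with respect to N'' = N' \ {¬P, ¬Q}, where P, Q are fresh propositional atoms maximal in the order ≺. -/
/-- A propositional clause: a set of literals, i.e. of (atom, polarity) pairs. -/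
abbrev PClause (Atom : Type) := Set (Atom × Bool)

/-- A valuation satisfies a clause if some literal of it is true. -/
def satC {Atom : Type} (v : Atom → Bool) (C : PClause Atom) : Prop :=
  ∃ l ∈ C, v l.1 = l.2

/-- A valuation satisfies a clause set if it satisfies every clause. -/
def satSet {Atom : Type} (v : Atom → Bool) (M : Set (PClause Atom)) : Prop :=
  ∀ C ∈ M, satC v C

/-! A model of `N'` is exactly a model of `N` making `P` and `Q` false: the unit clauses `¬P, ¬Q`
strip the guards from `P ∨ C₁, Q ∨ C₂`, and since `P, Q` are fresh every model of `N` can be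
modified to make them false. Moreover the two unit clauses together say precisely `¬(P ∨ Q)`, so
`N'` is satisfiable iff `N''` has a model falsifying `P ∨ Q`; as every clause of `N''` is
`≼ P ∨ Q`, this is non-redundancy of `P ∨ Q`. -/

section Semantics

variable {Atom : Type} {v w : Atom → Bool}

@[simp]
theorem satC_insert {l : Atom × Bool} {C : PClause Atom} :
    satC v (insert l C) ↔ v l.1 = l.2 ∨ satC v C :=
  Set.exists_mem_insert

@[simp]
theorem satC_singleton {l : Atom × Bool} : satC v {l} ↔ v l.1 = l.2 := by
  simp [satC]

@[simp]
theorem satSet_insert {C : PClause Atom} {M : Set (PClause Atom)} :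
    satSet v (insert C M) ↔ satC v C ∧ satSet v M :=
  Set.forall_mem_insert

@[simp]
theorem satSet_singleton {C : PClause Atom} : satSet v {C} ↔ satC v C := by
  simp [satSet]

@[simp]
theorem satSet_union {M M' : Set (PClause Atom)} :
    satSet v (M ∪ M') ↔ satSet v M ∧ satSet v M' := by
  simp only [satSet, Set.mem_union, or_imp, forall_and]

theorem satSet_iff_diff {M S : Set (PClause Atom)} (hS : S ⊆ M) :
    satSet v M ↔ satSet v (M \ S) ∧ satSet v S := by
  rw [← satSet_union, Set.sdiff_union_of_subset hS]

theorem satSet_congr_of_fresh {A : Set Atom} {M : Set (PClause Atom)}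
    (hfresh : ∀ C ∈ M, ∀ a ∈ A, ∀ b, (a, b) ∉ C) (hvw : ∀ a ∉ A, v a = w a) :
    satSet v M ↔ satSet w M := by
  have hC : ∀ C ∈ M, satC v C ↔ satC w C := fun C hCM =>
    exists_congr fun l => and_congr_right fun hl => by
      rw [hvw l.1 fun ha => hfresh C hCM l.1 ha l.2 hl]
  exact forall₂_congr hC

theorem satSet_units_iff_not_satC_pair {P Q : Atom} :
    satSet v {{(P, false)}, {(Q, false)}} ↔ ¬ satC v {(P, true), (Q, true)} := by
  simp

theorem satSet_guarded_iff {N : Set (PClause Atom)} {P Q : Atom} {C₁ C₂ : PClause Atom}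
    (hC₁ : C₁ ∈ N) (hC₂ : C₂ ∈ N) :
    satSet v ((N \ {C₁, C₂}) ∪
        {insert (P, true) C₁, insert (Q, true) C₂, {(P, false)}, {(Q, false)}}) ↔
      satSet v N ∧ v P = false ∧ v Q = false := by
  have hsub : {C₁, C₂} ⊆ N := Set.insert_subset hC₁ (Set.singleton_subset_iff.2 hC₂)
  rw [satSet_iff_diff hsub]
  simp only [satSet_union, satSet_insert, satSet_singleton, satC_insert, satC_singleton]
  cases v P <;> cases v Q <;> simp

end Semantics

theorem redundancy_undecidability_transfer_general
    (Atom : Type) (P Q : Atom)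
    (N : Set (PClause Atom))
    (hfreshP : ∀ C ∈ N, ∀ b : Bool, (P, b) ∉ C)
    (hfreshQ : ∀ C ∈ N, ∀ b : Bool, (Q, b) ∉ C)
    (C₁ C₂ : PClause Atom) (hC₁ : C₁ ∈ N) (hC₂ : C₂ ∈ N)
    (le : PClause Atom → PClause Atom → Prop)
    (N' : Set (PClause Atom))
    (hN' : N' = (N \ {C₁, C₂}) ∪
      {insert (P, true) C₁, insert (Q, true) C₂, {(P, false)}, {(Q, false)}})
    (N'' : Set (PClause Atom))
    (hN'' : N'' = N' \ {{(P, false)}, {(Q, false)}})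
    (PQ : PClause Atom) (hPQdef : PQ = {(P, true), (Q, true)})
    (hmax : ∀ C ∈ N'', le C PQ) :
    ((∃ v : Atom → Bool, satSet v N) ↔ (∃ v : Atom → Bool, satSet v N')) ∧
    ((∃ v : Atom → Bool, satSet v N') ↔
      ¬ (∀ v : Atom → Bool, satSet v {C | C ∈ N'' ∧ le C PQ} → satC v PQ)) := by
  classical
  have hmodel : ∀ v, satSet v N' ↔ satSet v N ∧ v P = false ∧ v Q = false := fun v =>
    hN' ▸ satSet_guarded_iff hC₁ hC₂
  have hunits : {{(P, false)}, {(Q, false)}} ⊆ N' := by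
    rw [hN']
    exact Set.subset_union_of_subset_right (by simp [Set.insert_subset_iff]) _
  have hsplit : ∀ v, satSet v N' ↔ satSet v N'' ∧ ¬ satC v PQ := fun v => by
    rw [hN'', hPQdef, ← satSet_units_iff_not_satC_pair, ← satSet_iff_diff hunits]
  have hbelow : {C | C ∈ N'' ∧ le C PQ} = N'' := Set.sep_eq_self_iff_mem_true.2 hmax
  refine ⟨⟨?_, fun ⟨v, hv⟩ => ⟨v, ((hmodel v).1 hv).1⟩⟩, ?_⟩
  · rintro ⟨v, hv⟩
    let w : Atom → Bool := fun a => if a = P ∨ a = Q then false else v a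
    have hfresh : ∀ C ∈ N, ∀ a ∈ ({P, Q} : Set Atom), ∀ b, (a, b) ∉ C := by
      rintro C hC a (rfl | rfl) b
      exacts [hfreshP C hC b, hfreshQ C hC b]
    have hvw : ∀ a ∉ ({P, Q} : Set Atom), v a = w a := fun a ha => (if_neg ha).symm
    exact ⟨w, (hmodel w).2 ⟨(satSet_congr_of_fresh hfresh hvw).1 hv, by simp [w], by simp [w]⟩⟩
  · rw [hbelow]
    simp only [hsplit, not_forall, exists_prop]

/-- Undecidability transfer via redundancy: for a clause set `N ∋ C₁, C₂` over
atoms not containing the fresh atoms `P, Q`, let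
`N' = (N \ {C₁,C₂}) ∪ {P ∨ C₁, Q ∨ C₂, ¬P, ¬Q}` and `N'' = N' \ {¬P, ¬Q}`.
With an order `≺` in which `P ∨ Q` is maximal (every clause of `N''` is `≼ P ∨ Q`),
(1) `N` is satisfiable iff `N'` is satisfiable, and (2) `N'` is satisfiable iff
`P ∨ Q` is non-redundant w.r.t. `N''`, i.e. `N''^{≼ P∨Q} ⊭ P ∨ Q`. -/
theorem redundancy_undecidability_transfer
    (Atom : Type) (P Q : Atom) (hPQ : P ≠ Q)
    (N : Set (PClause Atom))
    (hfreshP : ∀ C ∈ N, ∀ b : Bool, (P, b) ∉ C)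
    (hfreshQ : ∀ C ∈ N, ∀ b : Bool, (Q, b) ∉ C)
    (C₁ C₂ : PClause Atom) (hC₁ : C₁ ∈ N) (hC₂ : C₂ ∈ N)
    (le : PClause Atom → PClause Atom → Prop)
    (N' : Set (PClause Atom))
    (hN' : N' = (N \ {C₁, C₂}) ∪
      {insert (P, true) C₁, insert (Q, true) C₂, {(P, false)}, {(Q, false)}})
    (N'' : Set (PClause Atom))
    (hN'' : N'' = N' \ {{(P, false)}, {(Q, false)}})
    (PQ : PClause Atom) (hPQdef : PQ = {(P, true), (Q, true)})
    (hmax : ∀ C ∈ N'', le C PQ) :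
    ((∃ v : Atom → Bool, satSet v N) ↔ (∃ v : Atom → Bool, satSet v N')) ∧
    ((∃ v : Atom → Bool, satSet v N') ↔
      ¬ (∀ v : Atom → Bool, satSet v {C | C ∈ N'' ∧ le C PQ} → satC v PQ)) :=
  redundancy_undecidability_transfer_general Atom P Q N hfreshP hfreshQ C₁ C₂ hC₁ hC₂ le N' hN' N''
    hN'' PQ hPQdef hmax
end
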